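/- Let n ≥ 1 and q be a positive integer, let A, B ∈ M_n(ℤ), and let ℓ be a positive integer such that ℓ·∏_{p prime, p∣q} p divides q. Assume ℓ divides every entry of B. Then: if ℓ does not divide every entry of A, then K_n(A, B; q) = 0; and if ℓ divides every entry of A, then K_n(A, B; q) = ℓ^{n²}·K_n(ℓ^{−1}A, ℓ^{−1}B; q/ℓ), where ℓ^{−1}A and ℓ^{−1}B denote the integer matrices obtained by dividing every entry by ℓ. -/

import Mathlib

/-!
Write `q = ℓ q'`. Every prime factor of `q` divides `q'`, so the reduction
`M_n(ℤ/q) → M_n(ℤ/q')` is a local homomorphism: a matrix is invertible as soon as its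
reduction is. Since `ℓ ∣ B`, the phase `tr(B X⁻¹)/q = tr((ℓ⁻¹B) X⁻¹)/q'` only depends on the
reduction of `X`. If `ℓ ∤ A i j`, translating `X` by `q' E_{ji}` permutes `GL_n(ℤ/q)`, fixes
the reduction and multiplies the sum by `e(q' A i j / q) ≠ 1`, so the sum vanishes. If `ℓ ∣ A`,
the whole summand only depends on the reduction of `X`, and every fibre of
`GL_n(ℤ/q) → GL_n(ℤ/q')` has `ℓ^{n²}` elements.
-/

open scoped BigOperators

/-- The matrix Kloosterman sum `K_n(A,B;q)` (set to `0` in the degenerate case `q = 0`). -/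
noncomputable def Kl (n q : ℕ) (A B : Matrix (Fin n) (Fin n) ℤ) : ℂ :=
  if h : q = 0 then 0
  else
    letI : NeZero q := ⟨h⟩
    ∑ X : (Matrix (Fin n) (Fin n) (ZMod q))ˣ,
      Complex.exp (2 * (Real.pi : ℂ) * Complex.I *
        (((Matrix.trace
            ((A.map (Int.cast : ℤ → ZMod q)) * (X : Matrix (Fin n) (Fin n) (ZMod q)) +
              (B.map (Int.cast : ℤ → ZMod q)) *
                ((X⁻¹ : (Matrix (Fin n) (Fin n) (ZMod q))ˣ) :
                  Matrix (Fin n) (Fin n) (ZMod q)))).val : ℂ) / (q : ℂ)))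

open Finset Matrix ZMod

theorem ZMod.isLocalHom_castHom {m n : ℕ} [NeZero n] (h : m ∣ n)
    (hrad : (∏ p ∈ n.primeFactors, p) ∣ m) : IsLocalHom (castHom h (ZMod m)) := by
  refine ⟨fun x hx => ?_⟩
  rw [castHom_apply, ← natCast_val, isUnit_iff_coprime] at hx
  rw [← natCast_zmod_val x, isUnit_iff_coprime]
  refine Nat.coprime_of_dvd fun p hp hpx hpn => ?_
  have hpm : p ∣ m :=
    (dvd_prod_of_mem _ (Nat.mem_primeFactors.2 ⟨hp, hpn, NeZero.ne n⟩)).trans hrad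
  exact hp.one_lt.ne' (Nat.eq_one_of_dvd_coprimes hx hpx hpm)

instance RingHom.isLocalHom_mapMatrix {m R S : Type*} [Fintype m] [DecidableEq m] [CommRing R]
    [CommRing S] (f : R →+* S) [IsLocalHom f] :
    IsLocalHom (f.mapMatrix : Matrix m m R →+* Matrix m m S) := by
  refine ⟨fun M hM => ?_⟩
  rw [isUnit_iff_isUnit_det] at hM ⊢
  rw [← RingHom.map_det] at hM
  exact hM.of_map f _

theorem Function.Surjective.matrix_map {m α β : Type*} {f : α → β}
    (hf : Function.Surjective f) : Function.Surjective fun M : Matrix m m α => M.map f :=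
  fun N => ⟨N.map (Function.surjInv hf), by ext; simp [Function.surjInv_eq hf]⟩

theorem AddMonoidHom.card_mul_card_fiber {G H : Type*} [AddGroup G] [AddGroup H] [Finite G]
    (f : G →+ H) (hf : Function.Surjective f) (h : H) :
    Nat.card H * Nat.card {g // f g = h} = Nat.card G := by
  classical
  have := Fintype.ofFinite G
  have := Fintype.ofSurjective f hf
  calc Nat.card H * Nat.card {g // f g = h} = ∑ h' : H, #{g | f g = h'} := by
        rw [sum_congr rfl fun h' _ => AddMonoidHom.card_fiber_eq_of_mem_range f (hf h') (hf h),
          sum_const, card_univ, smul_eq_mul, Nat.card_eq_fintype_card, Nat.card_eq_fintype_card,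
          Fintype.card_subtype]
    _ = Nat.card G := by
        rw [Nat.card_eq_fintype_card, ← card_univ]
        exact (card_eq_sum_card_fiberwise fun _ _ => mem_univ _).symm

section IsLocalHom

variable {R S : Type*} [Ring R] [Ring S] (f : R →+* S) [IsLocalHom f]

theorem isUnit_add_of_map_eq_zero (x : Rˣ) {N : R} (hN : f N = 0) : IsUnit ((x : R) + N) :=
  IsUnit.of_map f _ (by rw [map_add, hN, add_zero]; exact x.isUnit.map f)

noncomputable def unitsTranslate {N : R} (hN : f N = 0) : Rˣ ≃ Rˣ where
  toFun x := (isUnit_add_of_map_eq_zero f x hN).unit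
  invFun x := (isUnit_add_of_map_eq_zero f x (N := -N) (by rw [map_neg, hN, neg_zero])).unit
  left_inv x := Units.ext (by simp)
  right_inv x := Units.ext (by simp)

theorem coe_unitsTranslate {N : R} (hN : f N = 0) (x : Rˣ) :
    (unitsTranslate f hN x : R) = x + N := rfl

theorem map_unitsTranslate {N : R} (hN : f N = 0) (x : Rˣ) :
    Units.map (f : R →* S) (unitsTranslate f hN x) = Units.map (f : R →* S) x :=
  Units.ext (by simp [coe_unitsTranslate, hN])

theorem sum_units_eq_zero_of_translate [Fintype R] [DecidableEq R] {K : Type*} [CommRing K]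
    [NoZeroDivisors K] {N : R} (hN : f N = 0) {φ : R → K} {c : K} (hc : c ≠ 1)
    (hφ : ∀ x, φ (x + N) = c * φ x) (g : Sˣ → K) :
    ∑ x : Rˣ, φ x * g (Units.map (f : R →* S) x) = 0 := by
  have h : ∑ x : Rˣ, φ x * g (Units.map (f : R →* S) x) =
      c * ∑ x : Rˣ, φ x * g (Units.map (f : R →* S) x) := by
    rw [mul_sum]
    refine (Fintype.sum_equiv (unitsTranslate f hN) _ _ fun x => ?_).symm
    rw [map_unitsTranslate, coe_unitsTranslate, hφ, mul_assoc]
  have h' : (1 - c) * ∑ x : Rˣ, φ x * g (Units.map (f : R →* S) x) = 0 := by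
    linear_combination h
  exact (mul_eq_zero.1 h').resolve_left (sub_ne_zero.2 hc.symm)

theorem card_units_fiber (y : Sˣ) :
    Nat.card {x : Rˣ // Units.map (f : R →* S) x = y} = Nat.card {r : R // f r = y} :=
  Nat.card_congr
    { toFun x := ⟨x.1, by simp [← x.2]⟩
      invFun r := ⟨(IsUnit.of_map f _ (by rw [r.2]; exact y.isUnit)).unit,
        Units.ext (by simp [r.2])⟩
      left_inv x := by ext; rfl
      right_inv r := rfl }

theorem sum_units_comp_map [Fintype R] [DecidableEq R] [Fintype S] [DecidableEq S]
    {M : Type*} [AddCommMonoid M] {c : ℕ} (hc : ∀ s : S, Nat.card {r : R // f r = s} = c)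
    (g : Sˣ → M) : ∑ x : Rˣ, g (Units.map (f : R →* S) x) = c • ∑ y, g y := by
  rw [← Fintype.sum_fiberwise' (Units.map (f : R →* S)) g, smul_sum]
  refine sum_congr rfl fun y _ => ?_
  rw [sum_const, card_univ, ← Nat.card_eq_fintype_card, ← hc y, card_units_fiber]

end IsLocalHom

theorem natCast_mul_intCast_eq_zero_iff {ℓ q : ℕ} (hq : q ≠ 0) (a : ℤ) :
    (q : ZMod (ℓ * q)) * a = 0 ↔ (ℓ : ℤ) ∣ a := by
  rw [← Int.cast_natCast, ← Int.cast_mul, intCast_zmod_eq_zero_iff_dvd, Nat.cast_mul,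
    mul_comm (ℓ : ℤ), mul_dvd_mul_iff_left (Int.natCast_ne_zero.2 hq)]

abbrev matrixCastHom (m : Type*) [Fintype m] [DecidableEq m] (ℓ q : ℕ) :
    Matrix m m (ZMod (ℓ * q)) →+* Matrix m m (ZMod q) :=
  (castHom (Nat.dvd_mul_left q ℓ) (ZMod q)).mapMatrix

noncomputable def klSummand {m : Type*} [Fintype m] [DecidableEq m] {q : ℕ} [NeZero q]
    (A B : Matrix m m ℤ) (X : (Matrix m m (ZMod q))ˣ) : ℂ :=
  stdAddChar (trace (A.map Int.cast * (X : Matrix m m (ZMod q)))) *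
    stdAddChar (trace (B.map Int.cast * (↑X⁻¹ : Matrix m m (ZMod q))))

section Reduction

variable {m : Type*} [Fintype m] [DecidableEq m] {ℓ q : ℕ} [NeZero (ℓ * q)] [NeZero q]

theorem stdAddChar_natCast_mul (z : ZMod (ℓ * q)) :
    stdAddChar ((ℓ : ZMod (ℓ * q)) * z) =
      stdAddChar (castHom (Nat.dvd_mul_left q ℓ) (ZMod q) z) := by
  have hℓ : (ℓ : ℂ) ≠ 0 := Nat.cast_ne_zero.2 (left_ne_zero_of_mul (NeZero.ne (ℓ * q)))
  have hq : (q : ℂ) ≠ 0 := Nat.cast_ne_zero.2 (NeZero.ne q)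
  obtain ⟨k, rfl⟩ := intCast_surjective z
  rw [map_intCast, ← Int.cast_natCast, ← Int.cast_mul, stdAddChar_coe, stdAddChar_coe]
  congr 1
  push_cast
  field_simp

theorem stdAddChar_trace_descend (C : Matrix m m ℤ) (hC : ∀ i j, (ℓ : ℤ) ∣ C i j)
    (M : Matrix m m (ZMod (ℓ * q))) :
    stdAddChar (trace (C.map Int.cast * M)) =
      stdAddChar (trace ((of fun i j => C i j / (ℓ : ℤ)).map Int.cast *
        matrixCastHom m ℓ q M)) := by
  have hC' : C.map (Int.cast : ℤ → ZMod (ℓ * q)) =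
      (ℓ : ZMod (ℓ * q)) • (of fun i j => C i j / (ℓ : ℤ)).map Int.cast := by
    ext i j
    rw [map_apply, Matrix.smul_apply, map_apply, smul_eq_mul, ← Int.cast_natCast, ← Int.cast_mul]
    exact congrArg _ (Int.mul_ediv_cancel' (hC i j)).symm
  rw [hC', smul_mul, trace_smul, smul_eq_mul, stdAddChar_natCast_mul, AddMonoidHom.map_trace,
    RingHom.mapMatrix_apply, Matrix.map_mul, Matrix.map_map]
  simp only [Function.comp_def, map_intCast]

theorem klSummand_descend (A B : Matrix m m ℤ) (hA : ∀ i j, (ℓ : ℤ) ∣ A i j)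
    (hB : ∀ i j, (ℓ : ℤ) ∣ B i j) (X : (Matrix m m (ZMod (ℓ * q)))ˣ) :
    klSummand A B X =
      klSummand (of fun i j => A i j / (ℓ : ℤ)) (of fun i j => B i j / (ℓ : ℤ))
        (Units.map (matrixCastHom m ℓ q : Matrix m m (ZMod (ℓ * q)) →* Matrix m m (ZMod q)) X) := by
  rw [klSummand, klSummand, stdAddChar_trace_descend A hA, stdAddChar_trace_descend B hB,
    Units.coe_map_inv]
  rfl

theorem card_matrixCastHom_fiber (N : Matrix m m (ZMod q)) :
    Nat.card {M // matrixCastHom m ℓ q M = N} = ℓ ^ (Fintype.card m ^ 2) := by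
  have h := AddMonoidHom.card_mul_card_fiber (matrixCastHom m ℓ q).toAddMonoidHom
    (castHom_surjective _).matrix_map N
  simp only [Nat.card_eq_fintype_card, Matrix, Fintype.card_fun, ZMod.card] at h
  rw [← pow_mul, ← pow_mul, mul_pow, ← sq, mul_comm] at h
  exact Nat.eq_of_mul_eq_mul_right (pow_pos (Nat.pos_of_ne_zero (NeZero.ne q)) _) h

end Reduction

theorem Kl_eq_sum_klSummand (n q : ℕ) [NeZero q] (A B : Matrix (Fin n) (Fin n) ℤ) :
    Kl n q A B = ∑ X : (Matrix (Fin n) (Fin n) (ZMod q))ˣ, klSummand A B X := by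
  rw [Kl, dif_neg (NeZero.ne q)]
  refine sum_congr rfl fun X _ => ?_
  rw [klSummand, ← AddChar.map_add_eq_mul, ← trace_add, stdAddChar_apply, toCircle_apply]
  congr 1
  ring

section Descent

variable {n ℓ q : ℕ} [NeZero (ℓ * q)] [NeZero q]
  [IsLocalHom (castHom (Nat.dvd_mul_left q ℓ) (ZMod q))] (A B : Matrix (Fin n) (Fin n) ℤ)

theorem Kl_eq_zero_of_not_dvd (hB : ∀ i j, (ℓ : ℤ) ∣ B i j) {i j : Fin n}
    (hij : ¬(ℓ : ℤ) ∣ A i j) : Kl n (ℓ * q) A B = 0 := by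
  rw [Kl_eq_sum_klSummand]
  simp only [klSummand, stdAddChar_trace_descend B hB]
  refine sum_units_eq_zero_of_translate (matrixCastHom (Fin n) ℓ q)
    (N := single j i (q : ZMod (ℓ * q)))
    (φ := fun X => stdAddChar (trace (A.map Int.cast * X)))
    (c := stdAddChar ((q : ZMod (ℓ * q)) * (A i j : ZMod (ℓ * q)))) ?_ ?_ (fun X => ?_)
    (fun Y => stdAddChar (trace ((of fun i j => B i j / (ℓ : ℤ)).map Int.cast *
      (↑Y⁻¹ : Matrix (Fin n) (Fin n) (ZMod q)))))
  · rw [RingHom.mapMatrix_apply, map_single, map_natCast, natCast_self, single_zero]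
  · rw [Ne, ← (stdAddChar (N := ℓ * q)).map_zero_eq_one, injective_stdAddChar.eq_iff,
      natCast_mul_intCast_eq_zero_iff (NeZero.ne q)]
    exact hij
  · rw [mul_add, trace_add, AddChar.map_add_eq_mul, trace_mul_single, mul_comm]
    simp [mul_comm]

theorem Kl_eq_pow_mul_Kl (hA : ∀ i j, (ℓ : ℤ) ∣ A i j) (hB : ∀ i j, (ℓ : ℤ) ∣ B i j) :
    Kl n (ℓ * q) A B = (ℓ : ℂ) ^ (n ^ 2) *
      Kl n q (of fun i j => A i j / (ℓ : ℤ)) (of fun i j => B i j / (ℓ : ℤ)) := by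
  rw [Kl_eq_sum_klSummand, Kl_eq_sum_klSummand]
  simp only [klSummand_descend A B hA hB]
  rw [sum_units_comp_map (matrixCastHom (Fin n) ℓ q) card_matrixCastHom_fiber,
    Fintype.card_fin, nsmul_eq_mul, Nat.cast_pow]

end Descent

theorem matrix_kloosterman_descend
    (n q ℓ : ℕ) (hq : 0 < q)
    (hdvd : (ℓ * ∏ p ∈ q.primeFactors, p) ∣ q)
    (A B : Matrix (Fin n) (Fin n) ℤ)
    (hB : ∀ i j, (ℓ : ℤ) ∣ B i j) :
    ((¬ ∀ i j, (ℓ : ℤ) ∣ A i j) → Kl n q A B = 0) ∧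
    ((∀ i j, (ℓ : ℤ) ∣ A i j) →
      Kl n q A B = (ℓ : ℂ) ^ (n ^ 2) *
        Kl n (q / ℓ) (Matrix.of fun i j => A i j / (ℓ : ℤ))
          (Matrix.of fun i j => B i j / (ℓ : ℤ))) := by
  obtain ⟨q', rfl⟩ := Nat.dvd_trans (Nat.dvd_mul_right ℓ _) hdvd
  have hℓ : 0 < ℓ := Nat.pos_of_ne_zero (left_ne_zero_of_mul hq.ne')
  have : NeZero (ℓ * q') := ⟨hq.ne'⟩
  have : NeZero q' := ⟨right_ne_zero_of_mul hq.ne'⟩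
  have : IsLocalHom (castHom (Nat.dvd_mul_left q' ℓ) (ZMod q')) :=
    isLocalHom_castHom _ (Nat.dvd_of_mul_dvd_mul_left hℓ hdvd)
  rw [Nat.mul_div_cancel_left q' hℓ]
  refine ⟨fun hA => ?_, fun hA => Kl_eq_pow_mul_Kl A B hA hB⟩
  push Not at hA
  obtain ⟨i, j, hij⟩ := hA
  exact Kl_eq_zero_of_not_dvd A B hB hij
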